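/- Let (K, δ) be a differential field of characteristic 0, f ∈ K{x} a differential polynomial of order n, and ā ∈ K^{n+1} with f_alg(ā) = 0 and s(f)_alg(ā) ≠ 0. Then there is a unique irreducible factor g of f (in the UFD K{x}) such that g_alg(ā) = 0; moreover ord(g) = n and s(g)_alg(ā) ≠ 0. -/

import Mathlib

/-!
Factor `f = g * h` with `g` an irreducible factor vanishing at `a`. Since `g(a) = 0`, the
product rule gives `∂f/∂xₙ (a) = ∂g/∂xₙ (a) · h(a)`, so the nonvanishing separant forces
both `∂g/∂xₙ (a) ≠ 0` (so `ord g = n`, as `ord g ≤ ord f`) and `h(a) ≠ 0`. Any other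
irreducible, hence prime, factor vanishing at `a` cannot divide `h`, so it divides `g` and
is associated to it.
-/

/-!
STATEMENT 1. `K{x}` is modelled as `MvPolynomial ℕ K` (the variable `X i` stands for
`x^(i)`); the order of `f` is `f.vars.sup id`, `f_alg(ā)` is `MvPolynomial.eval a f`,
and the separant of `f` is `pderiv (ord f) f`.  The unique irreducible factor is unique
up to associates.
-/

open MvPolynomial

noncomputable def dpOrder {K : Type*} [CommRing K] (f : MvPolynomial ℕ K) : ℕ :=
  f.vars.sup id

section Factors

variable {α β F : Type*} [CommMonoidWithZero α] [CommMonoidWithZero β] [FunLike F α β]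
  [MonoidWithZeroHomClass F α β]

theorem exists_irreducible_dvd_map_eq_zero [UniqueFactorizationMonoid α] [NoZeroDivisors β]
    [Nontrivial β] (φ : F) {f : α} (hf : f ≠ 0) (hφf : φ f = 0) :
    ∃ g, Irreducible g ∧ g ∣ f ∧ φ g = 0 := by
  have hprod : (Multiset.map φ (UniqueFactorizationMonoid.factors f)).prod = 0 := by
    rw [← map_multiset_prod, ((UniqueFactorizationMonoid.factors_prod hf).map φ).eq_zero_iff]
    exact hφf
  obtain ⟨g, hg, hφg⟩ := Multiset.mem_map.mp (Multiset.prod_eq_zero_iff.mp hprod)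
  exact ⟨g, UniqueFactorizationMonoid.irreducible_of_factor g hg,
    UniqueFactorizationMonoid.dvd_of_mem_factors hg, hφg⟩

theorem Prime.associated_of_dvd_mul_of_map_ne_zero [IsCancelMulZero α] (φ : F) {p g h : α}
    (hp : Prime p) (hg : Irreducible g) (hpgh : p ∣ g * h) (hφp : φ p = 0) (hφh : φ h ≠ 0) :
    Associated p g := by
  rcases hp.dvd_or_dvd hpgh with hpg | ⟨t, rfl⟩
  · exact hp.irreducible.associated_of_dvd hg hpg
  · exact absurd (by rw [map_mul, hφp, zero_mul]) hφh

end Factors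

namespace MvPolynomial

variable {σ R : Type*}

theorem vars_subset_of_dvd [CommSemiring R] [NoZeroDivisors R] {p q : MvPolynomial σ R}
    (hpq : p ∣ q) (hq : q ≠ 0) : p.vars ⊆ q.vars := by
  classical
  obtain ⟨r, rfl⟩ := hpq
  rw [vars_def, vars_def, degrees_mul_eq (left_ne_zero_of_mul hq) (right_ne_zero_of_mul hq),
    Multiset.toFinset_add]
  exact Finset.subset_union_left

theorem eval_pderiv_mul_of_eval_eq_zero [CommSemiring R] {a : σ → R} {g : MvPolynomial σ R}
    (hg : eval a g = 0) (i : σ) (h : MvPolynomial σ R) :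
    eval a (pderiv i (g * h)) = eval a (pderiv i g) * eval a h := by
  rw [Derivation.leibniz, map_add, smul_eq_mul, smul_eq_mul, map_mul, map_mul, hg, zero_mul,
    zero_add, mul_comm]

end MvPolynomial

section Order

variable {R : Type*} [CommRing R]

theorem dpOrder_le_of_dvd [NoZeroDivisors R] {g f : MvPolynomial ℕ R} (hgf : g ∣ f)
    (hf : f ≠ 0) : dpOrder g ≤ dpOrder f :=
  Finset.sup_mono (vars_subset_of_dvd hgf hf)

theorem le_dpOrder_of_pderiv_ne_zero {g : MvPolynomial ℕ R} {i : ℕ} (hg : pderiv i g ≠ 0) :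
    i ≤ dpOrder g :=
  Finset.le_sup (f := id) (not_imp_comm.mp pderiv_eq_zero_of_notMem_vars hg)

end Order

theorem statement1_general {K : Type*} [Field K]
    (f : MvPolynomial ℕ K) (n : ℕ) (hn : dpOrder f = n)
    (a : ℕ → K) (hfa : eval a f = 0) (hsf : eval a (pderiv n f) ≠ 0) :
    ∃ g : MvPolynomial ℕ K,
      (Irreducible g ∧ g ∣ f ∧ eval a g = 0 ∧ dpOrder g = n ∧
        eval a (pderiv n g) ≠ 0) ∧
      ∀ g' : MvPolynomial ℕ K,
        Irreducible g' → g' ∣ f → eval a g' = 0 → Associated g' g := by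
  have hf : f ≠ 0 := by rintro rfl; simp at hsf
  obtain ⟨g, hg, ⟨h, rfl⟩, hga⟩ := exists_irreducible_dvd_map_eq_zero (eval a) hf hfa
  rw [eval_pderiv_mul_of_eval_eq_zero hga] at hsf
  obtain ⟨hsg, hha⟩ := mul_ne_zero_iff.mp hsf
  have hord : dpOrder g = n :=
    le_antisymm (hn ▸ dpOrder_le_of_dvd (dvd_mul_right g h) hf)
      (le_dpOrder_of_pderiv_ne_zero fun hzero => hsg (by rw [hzero, map_zero]))
  refine ⟨g, ⟨hg, dvd_mul_right g h, hga, hord, hsg⟩, fun g' hg' hg'f hg'a => ?_⟩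
  exact hg'.prime.associated_of_dvd_mul_of_map_ne_zero (eval a) hg hg'f hg'a hha

theorem statement1 {K : Type*} [Field K] [CharZero K]
    (δ : K → K) (hδadd : ∀ x y, δ (x + y) = δ x + δ y)
    (hδmul : ∀ x y, δ (x * y) = δ x * y + x * δ y)
    (f : MvPolynomial ℕ K) (n : ℕ) (hn : dpOrder f = n)
    (a : ℕ → K) (hfa : eval a f = 0) (hsf : eval a (pderiv n f) ≠ 0) :
    ∃ g : MvPolynomial ℕ K,
      (Irreducible g ∧ g ∣ f ∧ eval a g = 0 ∧ dpOrder g = n ∧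
        eval a (pderiv n g) ≠ 0) ∧
      ∀ g' : MvPolynomial ℕ K,
        Irreducible g' → g' ∣ f → eval a g' = 0 → Associated g' g :=
  statement1_general f n hn a hfa hsf
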